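/- arXiv:1004.5499 — 4 statements merged into one kernel-verified Lean document; each statement's English description precedes it below -/
import Mathlib

section
/- Let f ∈ C¹([α,β]) with α < β. Then as ε → 0⁺, ∫_α^β f(s)/√((s+ε-α)(s-α)) ds = -f(α) log ε + η + O(ε log ε), where η = f(α) log(4(β-α)) + ∫_α^β (f(s) - f(α))/(s-α) ds. -/
/-!
Put `t = s - α ∈ [0, L]` with `L = β - α` and split `f = f(α) + (f - f(α))`. The constant part
integrates exactly, `2 log (√t + √(t + ε))` being an antiderivative of `1 / √((t + ε) t)`, and
`2 log (√L + √(L + ε)) = log (4L) + O(ε)`. For the rest, a `C¹` function is Lipschitz, so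
`|f(s) - f(α)| ≤ K t`, while `|1 / √((t + ε) t) - 1 / t| ≤ ε / (t (t + ε))`. Replacing the kernel by
`1 / t` therefore costs at most `K ε ∫₀ᴸ dt / (t + ε) = K ε log ((L + ε) / ε) = O(ε |log ε|)`.
-/

open Filter Asymptotics Topology Real
open MeasureTheory Set

variable {L ε t : ℝ}

lemma hasDerivAt_two_mul_log_sqrt_add_sqrt (hε : 0 ≤ ε) (ht : 0 < t) :
    HasDerivAt (fun t => 2 * log (√t + √(t + ε))) (1 / √((t + ε) * t)) t := by
  have ha : 0 < √t := sqrt_pos.2 ht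
  have hb : 0 < √(t + ε) := sqrt_pos.2 (by linarith)
  have hsum : HasDerivAt (fun t => √t + √(t + ε)) (1 / (2 * √t) + 1 / (2 * √(t + ε))) t :=
    (hasDerivAt_sqrt ht.ne').add (((hasDerivAt_id' t).add_const ε).sqrt (by linarith))
  refine ((hsum.log (by positivity)).const_mul 2).congr_deriv ?_
  rw [sqrt_mul (by linarith)]
  field_simp
  ring

lemma continuousOn_two_mul_log_sqrt_add_sqrt (hε : 0 < ε) :
    ContinuousOn (fun t => 2 * log (√t + √(t + ε))) (Ici 0) := by
  refine continuousOn_const.mul (ContinuousOn.log (by fun_prop) fun t ht => ?_)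
  have : 0 < √(t + ε) := sqrt_pos.2 (by linarith [mem_Ici.1 ht])
  positivity

lemma intervalIntegrable_one_div_sqrt_add_mul_self (hL : 0 ≤ L) (hε : 0 < ε) :
    IntervalIntegrable (fun t => 1 / √((t + ε) * t)) volume 0 L := by
  refine intervalIntegral.intervalIntegrable_deriv_of_nonneg
    ((continuousOn_two_mul_log_sqrt_add_sqrt hε).mono ?_) (fun t ht => ?_) fun t _ => by positivity
  · rw [uIcc_of_le hL]; exact Icc_subset_Ici_self
  · rw [min_eq_left hL] at ht
    exact hasDerivAt_two_mul_log_sqrt_add_sqrt hε.le ht.1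

lemma integral_one_div_sqrt_add_mul_self (hL : 0 ≤ L) (hε : 0 < ε) :
    ∫ t in (0 : ℝ)..L, 1 / √((t + ε) * t) = 2 * log (√L + √(L + ε)) - log ε := by
  rw [intervalIntegral.integral_eq_sub_of_hasDerivAt_of_le hL
    ((continuousOn_two_mul_log_sqrt_add_sqrt hε).mono Icc_subset_Ici_self)
    (fun t ht => hasDerivAt_two_mul_log_sqrt_add_sqrt hε.le ht.1)
    (intervalIntegrable_one_div_sqrt_add_mul_self hL hε)]
  simp only [sqrt_zero, zero_add, log_sqrt hε.le]
  ring

lemma abs_two_mul_log_sqrt_add_sqrt_sub_log_le (hL : 0 < L) (hε : 0 ≤ ε) :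
    |2 * log (√L + √(L + ε)) - log (4 * L)| ≤ ε / (2 * L) := by
  have hsq : (√L + √(L + ε)) ^ 2 = 2 * L + ε + 2 * √(L * (L + ε)) := by
    rw [add_sq, sq_sqrt hL.le, sq_sqrt (by linarith), sqrt_mul hL.le]; ring
  have hgm : 2 * √(L * (L + ε)) ≤ 2 * L + ε := by
    have := sqrt_le_sqrt (by nlinarith : L * (L + ε) ≤ (L + ε / 2) ^ 2)
    rw [sqrt_sq (by positivity)] at this
    linarith
  have hL' : √(L * L) ≤ √(L * (L + ε)) := sqrt_le_sqrt (by nlinarith)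
  rw [sqrt_mul_self hL.le] at hL'
  set r := (√L + √(L + ε)) ^ 2 / (4 * L)
  have hr1 : 1 ≤ r := by rw [le_div_iff₀ (by positivity), hsq]; linarith
  have hr2 : r - 1 ≤ ε / (2 * L) := by
    rw [sub_le_iff_le_add, div_le_iff₀ (by positivity), hsq]
    field_simp
    linarith
  have hlog : 2 * log (√L + √(L + ε)) - log (4 * L) = log r := by
    rw [log_div (by positivity) (by positivity), log_pow]; push_cast; ring
  rw [hlog, abs_of_nonneg (log_nonneg hr1)]
  linarith [log_le_sub_one_of_pos (by linarith : 0 < r)]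

lemma abs_one_div_sqrt_add_mul_self_sub_one_div_le (hε : 0 ≤ ε) (ht : 0 < t) :
    |1 / √((t + ε) * t) - 1 / t| ≤ ε / (t * (t + ε)) := by
  obtain ⟨a, ha, rfl⟩ : ∃ a, 0 < a ∧ a ^ 2 = t := ⟨√t, sqrt_pos.2 ht, sq_sqrt ht.le⟩
  obtain ⟨b, hab, hb⟩ : ∃ b, a ≤ b ∧ b ^ 2 = a ^ 2 + ε :=
    ⟨√(a ^ 2 + ε), le_sqrt_of_sq_le (by linarith), sq_sqrt (by positivity)⟩
  have hb0 : 0 < b := ha.trans_le hab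
  rw [← hb, sqrt_mul (by positivity), sqrt_sq hb0.le, sqrt_sq ha.le,
    show ε = b ^ 2 - a ^ 2 by linarith, abs_sub_comm,
    abs_of_nonneg (sub_nonneg.2 (one_div_le_one_div_of_le (by positivity) (by nlinarith))),
    div_sub_div _ _ (by positivity) (by positivity),
    div_le_div_iff₀ (by positivity) (by positivity)]
  nlinarith [mul_nonneg (mul_pos (pow_pos ha 4) hb0).le (sub_nonneg.2 hab)]

lemma abs_integral_div_sqrt_add_mul_self_sub_integral_div_le {g : ℝ → ℝ} {K : ℝ} (hL : 0 ≤ L)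
    (hε : 0 < ε) (hg : ContinuousOn g (Icc 0 L)) (hgK : ∀ t ∈ Icc 0 L, |g t| ≤ K * t) :
    |(∫ t in (0 : ℝ)..L, g t / √((t + ε) * t)) - ∫ t in (0 : ℝ)..L, g t / t|
      ≤ K * ε * log ((L + ε) / ε) := by
  have hg' : ContinuousOn g (Ioc 0 L) := hg.mono Ioc_subset_Icc_self
  have hdiv : IntervalIntegrable (fun t => g t / √((t + ε) * t)) volume 0 L := by
    simpa only [mul_one_div] using
      (intervalIntegrable_one_div_sqrt_add_mul_self hL hε).continuousOn_mul
      (by rwa [uIcc_of_le hL])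
  have hdiv' : IntervalIntegrable (fun t => g t / t) volume 0 L := by
    refine IntervalIntegrable.mono_fun' (g := fun _ => K) intervalIntegrable_const ?_ ?_
    · rw [uIoc_of_le hL]
      exact (hg'.div continuousOn_id fun t ht => ht.1.ne').aestronglyMeasurable measurableSet_Ioc
    · rw [uIoc_of_le hL, EventuallyLE, ae_restrict_iff' measurableSet_Ioc]
      refine ae_of_all _ fun t ht => ?_
      rw [norm_div, norm_eq_abs, norm_of_nonneg ht.1.le, div_le_iff₀ ht.1]
      exact hgK t (Ioc_subset_Icc_self ht)
  have hbound : IntervalIntegrable (fun t => K * ε * (1 / (t + ε))) volume 0 L :=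
    ContinuousOn.intervalIntegrable (continuousOn_const.mul (continuousOn_const.div (by fun_prop)
      fun t ht => by rw [uIcc_of_le hL] at ht; linarith [ht.1]))
  have hpointwise : ∀ t ∈ Ioc 0 L, ‖g t / √((t + ε) * t) - g t / t‖ ≤ K * ε * (1 / (t + ε)) := by
    intro t ht
    calc ‖g t / √((t + ε) * t) - g t / t‖ = |g t| * |1 / √((t + ε) * t) - 1 / t| := by
          rw [norm_eq_abs, ← abs_mul]; congr 1; ring
      _ ≤ K * t * (ε / (t * (t + ε))) :=
          mul_le_mul (hgK t (Ioc_subset_Icc_self ht))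
            (abs_one_div_sqrt_add_mul_self_sub_one_div_le hε.le ht.1) (abs_nonneg _)
            ((abs_nonneg _).trans (hgK t (Ioc_subset_Icc_self ht)))
      _ = K * ε * (1 / (t + ε)) := by field_simp [ht.1.ne']
  rw [← intervalIntegral.integral_sub hdiv hdiv', ← norm_eq_abs]
  refine (intervalIntegral.norm_integral_le_of_norm_le hL (ae_of_all _ hpointwise) hbound).trans_eq
    ?_
  rw [intervalIntegral.integral_const_mul,
    intervalIntegral.integral_comp_add_right (fun x : ℝ => 1 / x), zero_add,
    integral_one_div_of_pos hε (by linarith)]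

lemma isBigO_id_mul_log_nhdsGT_zero : (fun ε : ℝ => ε) =O[𝓝[>] 0] fun ε => ε * log ε := by
  refine IsBigO.of_bound 1 ?_
  filter_upwards [tendsto_log_nhdsGT_zero.eventually_le_atBot (-1)] with ε hε
  rw [one_mul, norm_mul]
  exact le_mul_of_one_le_right (norm_nonneg _) (le_abs.2 (Or.inr (by linarith)))

lemma isBigO_mul_log_add_div_self_nhdsGT_zero (hL : 0 < L) :
    (fun ε => ε * log ((L + ε) / ε)) =O[𝓝[>] 0] fun ε => ε * log ε := by
  have hlog : Tendsto (fun ε => log (L + ε)) (𝓝[>] 0) (𝓝 (log L)) :=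
    ((continuousAt_log hL.ne').tendsto.comp
      (by simpa using (continuous_const_add L).tendsto 0)).mono_left nhdsWithin_le_nhds
  have hfirst : (fun ε => ε * log (L + ε)) =O[𝓝[>] 0] fun ε => ε * log ε := by
    simpa using ((isBigO_refl (fun ε : ℝ => ε) _).mul (hlog.isBigO_one ℝ)).trans
      (isBigO_id_mul_log_nhdsGT_zero.congr_left fun ε => (mul_one ε).symm)
  refine (hfirst.sub (isBigO_refl _ _)).congr' ?_ EventuallyEq.rfl
  filter_upwards [self_mem_nhdsWithin] with ε (hε : 0 < ε)
  rw [log_div (by linarith) hε.ne', mul_sub]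

theorem LipschitzOnWith.abs_integral_div_sqrt_add_mul_self_sub_le {K : NNReal} {φ : ℝ → ℝ}
    (hL : 0 < L) (hε : 0 < ε) (hφ : LipschitzOnWith K φ (Icc 0 L)) :
    |(∫ t in (0 : ℝ)..L, φ t / √((t + ε) * t)) -
        (-(φ 0) * log ε + (φ 0 * log (4 * L) + ∫ t in (0 : ℝ)..L, (φ t - φ 0) / t))|
      ≤ |φ 0| / (2 * L) * ε + K * (ε * log ((L + ε) / ε)) := by
  have hcont : ContinuousOn (fun t => φ t - φ 0) (Icc 0 L) :=
    hφ.continuousOn.sub continuousOn_const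
  have hlin : ∀ t ∈ Icc 0 L, |φ t - φ 0| ≤ K * t := fun t ht => by
    simpa [← dist_eq, abs_of_nonneg ht.1] using hφ.dist_le_mul t ht 0 (left_mem_Icc.2 hL.le)
  have hI := intervalIntegrable_one_div_sqrt_add_mul_self hL.le hε
  have hsplit : ∫ t in (0 : ℝ)..L, φ t / √((t + ε) * t) =
      (φ 0 * ∫ t in (0 : ℝ)..L, 1 / √((t + ε) * t)) +
        ∫ t in (0 : ℝ)..L, (φ t - φ 0) / √((t + ε) * t) := by
    rw [← intervalIntegral.integral_const_mul, ← intervalIntegral.integral_add (hI.const_mul _)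
      (by simpa only [mul_one_div] using hI.continuousOn_mul (by rwa [uIcc_of_le hL.le]))]
    exact intervalIntegral.integral_congr fun t _ => by ring
  rw [hsplit, integral_one_div_sqrt_add_mul_self hL.le hε]
  calc _ = |φ 0 * (2 * log (√L + √(L + ε)) - log (4 * L)) +
        ((∫ t in (0 : ℝ)..L, (φ t - φ 0) / √((t + ε) * t)) -
          ∫ t in (0 : ℝ)..L, (φ t - φ 0) / t)| := by
        congr 1; ring
    _ ≤ |φ 0| * (ε / (2 * L)) + K * ε * log ((L + ε) / ε) := by
        refine (abs_add_le _ _).trans (add_le_add ?_ ?_)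
        · rw [abs_mul]
          exact mul_le_mul_of_nonneg_left (abs_two_mul_log_sqrt_add_sqrt_sub_log_le hL hε.le)
            (abs_nonneg _)
        · exact abs_integral_div_sqrt_add_mul_self_sub_integral_div_le hL.le hε hcont hlin
    _ = _ := by ring

theorem LipschitzOnWith.isBigO_integral_div_sqrt_add_mul_self_sub {K : NNReal} {φ : ℝ → ℝ}
    (hL : 0 < L) (hφ : LipschitzOnWith K φ (Icc 0 L)) :
    (fun ε => (∫ t in (0 : ℝ)..L, φ t / √((t + ε) * t)) -
        (-(φ 0) * log ε + (φ 0 * log (4 * L) + ∫ t in (0 : ℝ)..L, (φ t - φ 0) / t)))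
      =O[𝓝[>] 0] fun ε => ε * log ε := by
  have hbound : (fun ε => |φ 0| / (2 * L) * ε + K * (ε * log ((L + ε) / ε)))
      =O[𝓝[>] 0] fun ε => ε * log ε :=
    (isBigO_id_mul_log_nhdsGT_zero.const_mul_left _).add
      ((isBigO_mul_log_add_div_self_nhdsGT_zero hL).const_mul_left _)
  refine (IsBigO.of_bound' ?_).trans hbound
  filter_upwards [self_mem_nhdsWithin] with ε (hε : 0 < ε)
  have hlog : 0 ≤ log ((L + ε) / ε) := log_nonneg ((le_div_iff₀ hε).2 (by linarith))
  rw [norm_eq_abs, norm_of_nonneg (by positivity)]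
  exact hφ.abs_integral_div_sqrt_add_mul_self_sub_le hL hε

/-- Lemma A.4 (first estimate): for `f ∈ C¹([α,β])`, as `ε → 0⁺`,
`∫_α^β f(s)/√((s+ε-α)(s-α)) ds = -f(α) log ε + η + O(ε log ε)`, where
`η = f(α) log(4(β-α)) + ∫_α^β (f(s) - f(α))/(s-α) ds`. -/
theorem stmt_5 (α β : ℝ) (hαβ : α < β) (f : ℝ → ℝ)
    (hf : ContDiffOn ℝ 1 f (Set.Icc α β))
    (η : ℝ) (hη : η = f α * Real.log (4 * (β - α)) +
        ∫ s in α..β, (f s - f α) / (s - α)) :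
    (fun ε => (∫ s in α..β, f s / Real.sqrt ((s + ε - α) * (s - α))) -
        (-(f α) * Real.log ε + η))
      =O[𝓝[>] (0:ℝ)] (fun ε => ε * Real.log ε) := by
  obtain ⟨K, hK⟩ := hf.exists_lipschitzOnWith one_ne_zero (convex_Icc α β) isCompact_Icc
  have hφ : LipschitzOnWith K (fun t => f (t + α)) (Icc 0 (β - α)) := by
    have := hK.comp (isometry_add_right α).lipschitz.lipschitzOnWith
      fun t (ht : t ∈ Icc 0 (β - α)) => (⟨by linarith [ht.1], by linarith [ht.2]⟩ : t + α ∈ Icc α β)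
    rwa [mul_one] at this
  subst hη
  convert hφ.isBigO_integral_div_sqrt_add_mul_self_sub (sub_pos.2 hαβ) using 3 with ε
  · rw [← sub_self α, ← intervalIntegral.integral_comp_sub_right]
    simp only [sub_add_cancel, sub_add_eq_add_sub]
  · rw [zero_add, ← sub_self α, ← intervalIntegral.integral_comp_sub_right]
    simp only [sub_add_cancel]
end

section
/- With κ(σ) defined as the minimum period compatible with the parity constraints E_σ (as in the lower-bound theorem), and ς = (…,0,1,0,1,0) ∈ {0,1}ⁿ the alternating vector ending in 0, one has κ(ς) = n+2. Moreover κ(σ) = n+2 implies σ = ς. -/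
/-- The index set `E_σ ⊆ {0,…,n}` for `σ ∈ {0,1}ⁿ` (0-based: `σ i` is the paper's
`σ_{i+1}`): `0 ∈ E_σ ↔ σ₁ = 1`; for `1 ≤ j ≤ n-1`, `j ∈ E_σ ↔ (σ_j,σ_{j+1}) ≠ (1,0)`;
and `n ∈ E_σ`. -/
def sigmaE (n : ℕ) (σ : ℕ → Bool) : Set ℕ :=
  {j | j = n ∨ (j = 0 ∧ σ 0 = true) ∨
    (0 < j ∧ j < n ∧ ¬(σ (j - 1) = true ∧ σ j = false))}

/-- `κ(σ)`: the minimal `m₀` over integer sequences `2 ≤ m_n < ⋯ < m₁ < m₀`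
such that `m_j` is even for every `j ∈ E_σ`. -/
noncomputable def kappa (n : ℕ) (σ : ℕ → Bool) : ℕ :=
  sInf {m₀ | ∃ m : ℕ → ℕ, m 0 = m₀ ∧ 2 ≤ m n ∧ (∀ j < n, m (j + 1) < m j) ∧
    ∀ j ∈ sigmaE n σ, Even (m j)}

/-!
Every admissible sequence drops by at least one at each step, so `m₀ ≥ m_n + n ≥ n + 2`, and
`m_j = n + 2 - j` attains this bound for `ς`. Conversely, `m₀ = n + 2` forces `m_j = n + 2 - j`,
so every `j ∈ E_σ` has `n - j` even. Then `n - i` odd rules out `σ_i = 1` (which would put `i`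
into `E_σ`), and `n - i` even rules out `(σ_i, σ_{i+1}) ≠ (1, 0)` (which would put `i + 1` into
`E_σ`); this pins down `σ = ς`.
-/

namespace Kappa

variable {n : ℕ} {σ : ℕ → Bool}

def IsAdmissible (n : ℕ) (σ : ℕ → Bool) (m : ℕ → ℕ) : Prop :=
  2 ≤ m n ∧ (∀ j < n, m (j + 1) < m j) ∧ ∀ j ∈ sigmaE n σ, Even (m j)

theorem le_of_mem_sigmaE {j : ℕ} (hj : j ∈ sigmaE n σ) : j ≤ n := by
  rcases hj with h | h | h <;> omega

theorem mem_sigmaE_of_eq_true {i : ℕ} (hi : i < n) (hσ : σ i = true) : i ∈ sigmaE n σ := by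
  rcases Nat.eq_zero_or_pos i with rfl | hpos
  · exact Or.inr (Or.inl ⟨rfl, hσ⟩)
  · exact Or.inr (Or.inr ⟨hpos, hi, by simp [hσ]⟩)

theorem succ_mem_sigmaE {i : ℕ} (hi : i + 1 < n) (hσ : ¬(σ i = true ∧ σ (i + 1) = false)) :
    i + 1 ∈ sigmaE n σ :=
  Or.inr (Or.inr ⟨i.succ_pos, hi, hσ⟩)

theorem add_sub_le_of_forall_succ_lt {m : ℕ → ℕ} (hm : ∀ j < n, m (j + 1) < m j) {j : ℕ}
    (hj : j ≤ n) : m n + (n - j) ≤ m j := by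
  induction n, hj using Nat.le_induction with
  | base => simp
  | succ k hjk ih =>
    have := hm k (by omega)
    have := ih fun i hi => hm i (by omega)
    omega

namespace IsAdmissible

variable {m : ℕ → ℕ}

theorem sub_add_two_le (hm : IsAdmissible n σ m) {j : ℕ} (hj : j ≤ n) : n + 2 - j ≤ m j := by
  have := add_sub_le_of_forall_succ_lt hm.2.1 hj
  have := hm.1
  omega

theorem eq_sub_add_two (hm : IsAdmissible n σ m) (h0 : m 0 = n + 2) {j : ℕ} (hj : j ≤ n) :
    m j = n + 2 - j := by
  have := add_sub_le_of_forall_succ_lt (fun i (hi : i < j) => hm.2.1 i (by omega)) (Nat.zero_le j)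
  have := hm.sub_add_two_le hj
  omega

end IsAdmissible

theorem isAdmissible_two_mul : IsAdmissible n σ fun j => 2 * (n + 2 - j) :=
  ⟨by dsimp only; omega, fun j hj => by dsimp only; omega, fun j _ => even_two_mul _⟩

theorem exists_isAdmissible_kappa : ∃ m, m 0 = kappa n σ ∧ IsAdmissible n σ m :=
  Nat.sInf_mem (⟨_, _, rfl, isAdmissible_two_mul⟩ :
    {m₀ | ∃ m, m 0 = m₀ ∧ IsAdmissible n σ m}.Nonempty)

theorem add_two_le_kappa : n + 2 ≤ kappa n σ := by
  obtain ⟨m, h0, hm⟩ := exists_isAdmissible_kappa (n := n) (σ := σ)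
  simpa [h0] using hm.sub_add_two_le (Nat.zero_le n)

theorem even_sub_of_kappa_eq (hκ : kappa n σ = n + 2) {j : ℕ} (hj : j ∈ sigmaE n σ) :
    Even (n - j) := by
  obtain ⟨m, h0, hm⟩ := exists_isAdmissible_kappa (n := n) (σ := σ)
  have hjn := le_of_mem_sigmaE hj
  have := hm.2.2 j hj
  rw [hm.eq_sub_add_two (h0.trans hκ) hjn, show n + 2 - j = n - j + 2 by omega] at this
  exact (Nat.even_add.mp this).mpr even_two

def alternating (n : ℕ) (i : ℕ) : Bool := decide ((n - (i + 1)) % 2 = 1)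

theorem isAdmissible_alternating : IsAdmissible n (alternating n) fun j => n + 2 - j := by
  refine ⟨by dsimp only; omega, fun j hj => by dsimp only; omega, fun j hj => ?_⟩
  simp only [Nat.even_iff]
  rcases hj with rfl | ⟨rfl, h⟩ | ⟨hj0, hjn, h⟩
  · omega
  all_goals simp only [alternating, decide_eq_true_eq, decide_eq_false_iff_not] at h; omega

theorem kappa_alternating : kappa n (alternating n) = n + 2 :=
  le_antisymm (Nat.sInf_le ⟨_, rfl, isAdmissible_alternating⟩) add_two_le_kappa

theorem eq_alternating_of_forall_even (h : ∀ j ∈ sigmaE n σ, Even (n - j)) {i : ℕ} (hi : i < n) :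
    σ i = alternating n i := by
  simp only [Nat.even_iff] at h
  rcases Nat.mod_two_eq_zero_or_one (n - i) with hev | hodd
  · have hσ : σ i = true ∧ σ (i + 1) = false := by
      by_contra hσ
      have := h _ (succ_mem_sigmaE (by omega) hσ)
      omega
    simp only [alternating, hσ.1, Bool.true_eq, decide_eq_true_eq]
    omega
  · have hσ : σ i = false := by
      by_contra hσ
      have := h _ (mem_sigmaE_of_eq_true hi (by simpa using hσ))
      omega
    simp only [alternating, hσ, Bool.false_eq, decide_eq_false_iff_not]
    omega

end Kappa

open Kappa in
theorem stmt_13_general (n : ℕ) :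
    kappa n (fun i => decide ((n - (i + 1)) % 2 = 1)) = n + 2 ∧
    ∀ σ : ℕ → Bool, kappa n σ = n + 2 →
      ∀ i < n, σ i = decide ((n - (i + 1)) % 2 = 1) :=
  ⟨kappa_alternating, fun _ hκ _ hi =>
    eq_alternating_of_forall_even (fun _ hj => even_sub_of_kappa_eq hκ hj) hi⟩

/-- The alternating vector `ς = (…,0,1,0,1,0)` (1-based: `ς_j = 1` iff `n - j` is
odd) satisfies `κ(ς) = n+2`, and it is the only `σ ∈ {0,1}ⁿ` with `κ(σ) = n+2`. -/
theorem stmt_13 (n : ℕ) (hn : 1 ≤ n) :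
    kappa n (fun i => decide ((n - (i + 1)) % 2 = 1)) = n + 2 ∧
    ∀ σ : ℕ → Bool, kappa n σ = n + 2 →
      ∀ i < n, σ i = decide ((n - (i + 1)) % 2 = 1) :=
  stmt_13_general n
end

section
/- With κ(σ) as in the lower-bound theorem, the average of κ over all σ ∈ {0,1}ⁿ equals 3n/2 + 2, i.e. 2^{-n} Σ_{σ ∈ {0,1}ⁿ} κ(σ) = 3n/2 + 2. -/
/-!
The greedy sequence `m_n = 2`, `m_j` = least admissible value above `m_{j+1}`, is termwise
minimal among admissible sequences. Since no two consecutive indices are missing from `E_σ`,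
it never gets stuck and has the closed form
`m_j = 2 (1 + #{i ∈ (j, n] | i ∈ E_σ}) - [j ∉ E_σ]`.
Hence `κ(σ) = 2n + 2 - 2 #{0 < i < n | i ∉ E_σ} - [0 ∉ E_σ]`. For `0 < i < n` the event
`i ∉ E_σ` is `(σ_i, σ_{i+1}) = (1, 0)`, of probability `1/4`, and `0 ∉ E_σ` is `σ_1 = 0`,
of probability `1/2`; so the average is `2n + 2 - (n - 1)/2 - 1/2 = 3n/2 + 2`.
-/

open Finset

section Counting

variable {ι β : Type*} [Fintype ι] [DecidableEq ι] [Fintype β] [DecidableEq β]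

lemma card_mul_card_filter_apply_eq (a : ι) (x : β) :
    Fintype.card β * #{f : ι → β | f a = x} = Fintype.card β ^ Fintype.card ι := by
  have h := Fintype.card_filter_piFinset_const (univ : Finset β) a x
  rw [Fintype.piFinset_univ, if_pos (mem_univ x), card_univ] at h
  rw [h, mul_pow_sub_one (Fintype.card_pos_iff.2 ⟨a⟩).ne']

lemma card_sq_mul_card_filter_apply_eq_and_apply_eq {a b : ι} (hab : a ≠ b) (x y : β) :
    Fintype.card β ^ 2 * #{f : ι → β | f a = x ∧ f b = y} =
      Fintype.card β ^ Fintype.card ι := by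
  set s : ι → Finset β := Function.update (fun _ => univ) a {x}
  have hfilter : ({f : ι → β | f a = x ∧ f b = y} : Finset _) =
      {f ∈ Fintype.piFinset s | f b = y} := by
    rw [Fintype.piFinset_update_singleton_eq_filter_piFinset_eq (fun _ => univ) a (mem_univ x),
      Fintype.piFinset_univ (β := fun _ : ι => β), filter_filter]
  have hcard : ∀ j, #(s j) = Function.update (fun _ => Fintype.card β) a 1 j := fun j => by
    rcases eq_or_ne j a with rfl | hj <;> simp [s, *]
  have htwo : 1 < Fintype.card ι := Fintype.one_lt_card_iff.2 ⟨a, b, hab⟩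
  have hy : y ∈ s b := by simp [s, hab.symm]
  rw [hfilter, Fintype.card_filter_piFinset_eq_of_mem (α := fun _ => β) _ _ hy,
    prod_congr rfl fun j _ => hcard j, prod_update_of_mem (by simp [hab]), prod_const,
    sdiff_singleton_eq_erase, card_erase_of_mem (by simp [hab]), card_erase_of_mem (mem_univ b),
    card_univ, one_mul, ← pow_add]
  congr 1
  omega

end Counting

instance decidableMemSigmaE (n : ℕ) (σ : ℕ → Bool) : DecidablePred (· ∈ sigmaE n σ) :=
  fun _ => by unfold sigmaE; infer_instance

section SigmaE

variable {n j : ℕ} {σ : ℕ → Bool}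

lemma self_mem_sigmaE : n ∈ sigmaE n σ := Or.inl rfl

lemma zero_mem_sigmaE_iff (hn : 0 < n) : 0 ∈ sigmaE n σ ↔ σ 0 = true := by
  simp [sigmaE, hn.ne]

lemma mem_sigmaE_iff_of_pos (h0 : 0 < j) (hj : j < n) :
    j ∈ sigmaE n σ ↔ ¬(σ (j - 1) = true ∧ σ j = false) := by
  simp [sigmaE, h0, hj, hj.ne, h0.ne']

lemma succ_mem_sigmaE_of_notMem (hj : j < n) (h : j ∉ sigmaE n σ) : j + 1 ∈ sigmaE n σ := by
  rcases Nat.lt_or_ge (j + 1) n with hj' | hj'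
  · rw [mem_sigmaE_iff_of_pos j.succ_pos hj']
    rcases j.eq_zero_or_pos with rfl | h0
    · simp_all [zero_mem_sigmaE_iff hj]
    · simp_all [mem_sigmaE_iff_of_pos h0 hj]
  · rw [show j + 1 = n by omega]
    exact self_mem_sigmaE

end SigmaE

def IsAdmissible (n : ℕ) (σ : ℕ → Bool) (m : ℕ → ℕ) : Prop :=
  2 ≤ m n ∧ (∀ j < n, m (j + 1) < m j) ∧ ∀ j ∈ sigmaE n σ, Even (m j)

def minimalSeq (n : ℕ) (σ : ℕ → Bool) (j : ℕ) : ℕ :=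
  2 * (1 + #{i ∈ Ioc j n | i ∈ sigmaE n σ}) - if j ∈ sigmaE n σ then 0 else 1

section MinimalSeq

variable {n j : ℕ} {σ : ℕ → Bool}

lemma minimalSeq_self : minimalSeq n σ n = 2 := by
  simp [minimalSeq, self_mem_sigmaE]

lemma even_minimalSeq (h : j ∈ sigmaE n σ) : Even (minimalSeq n σ j) := by
  simp [minimalSeq, h]

lemma minimalSeq_add (hj : j < n) :
    minimalSeq n σ j + (if j ∈ sigmaE n σ then 0 else 1) +
      (if j + 1 ∈ sigmaE n σ then 0 else 1) = minimalSeq n σ (j + 1) + 2 := by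
  have hIoc : Ioc j n = (Ioc (j + 1) n).cons (j + 1) left_notMem_Ioc := by
    rw [← Icc_eq_cons_Ioc hj, Icc_add_one_left_eq_Ioc]
  simp only [minimalSeq, hIoc, filter_cons, apply_ite card, card_cons]
  split_ifs <;> omega

lemma isAdmissible_minimalSeq : IsAdmissible n σ (minimalSeq n σ) := by
  refine ⟨minimalSeq_self.ge, fun j hj => ?_, fun j hj => even_minimalSeq hj⟩
  have h := minimalSeq_add (σ := σ) hj
  by_cases hE : j ∈ sigmaE n σ
  · split_ifs at h <;> omega
  · simp only [hE, succ_mem_sigmaE_of_notMem hj hE, if_false, if_true] at h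
    omega

lemma minimalSeq_le {m : ℕ → ℕ} (hm : IsAdmissible n σ m) (hj : j ≤ n) :
    minimalSeq n σ j ≤ m j := by
  obtain ⟨h2, hlt, hev⟩ := hm
  induction hj using Nat.decreasingInduction with
  | self => rw [minimalSeq_self]; exact h2
  | of_succ j hj ih =>
    have h := minimalSeq_add (σ := σ) hj
    have hstep := hlt j hj
    split_ifs at h with hE hE'
    · -- two even terms of a strictly decreasing sequence are at least 2 apart
      obtain ⟨a, ha⟩ := hev j hE
      obtain ⟨b, hb⟩ := hev _ hE'
      omega
    all_goals omega

theorem kappa_eq_minimalSeq : kappa n σ = minimalSeq n σ 0 :=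
  le_antisymm (Nat.sInf_le ⟨_, rfl, isAdmissible_minimalSeq⟩)
    (le_csInf ⟨_, _, rfl, isAdmissible_minimalSeq⟩
      fun _ ⟨_, hm0, hm⟩ => hm0 ▸ minimalSeq_le hm n.zero_le)

end MinimalSeq

lemma card_mem_sigmaE_add_card_notMem_sigmaE {n : ℕ} {σ : ℕ → Bool} :
    #{i ∈ Ioc 0 n | i ∈ sigmaE n σ} + #{i ∈ Ioo 0 n | i ∉ sigmaE n σ} = n := by
  have hIoo : {i ∈ Ioc 0 n | i ∉ sigmaE n σ} = {i ∈ Ioo 0 n | i ∉ sigmaE n σ} := by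
    ext i
    have : n ∈ sigmaE n σ := self_mem_sigmaE
    simp only [mem_filter, mem_Ioc, mem_Ioo]
    grind
  rw [← hIoo, card_filter_add_card_filter_not, Nat.card_Ioc, Nat.sub_zero]

theorem kappa_add_two_mul_card_notMem (n : ℕ) (σ : ℕ → Bool) :
    kappa n σ + 2 * #{i ∈ Ioo 0 n | i ∉ sigmaE n σ} + (if 0 ∉ sigmaE n σ then 1 else 0) =
      2 * n + 2 := by
  have h := card_mem_sigmaE_add_card_notMem_sigmaE (n := n) (σ := σ)
  rw [kappa_eq_minimalSeq, minimalSeq]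
  split_ifs <;> omega

def padFalse {n : ℕ} (σ : Fin n → Bool) : ℕ → Bool :=
  fun i => if h : i < n then σ ⟨i, h⟩ else false

section Average

variable {n : ℕ}

lemma card_filter_zero_notMem_sigmaE (hn : 0 < n) :
    2 * #{σ : Fin n → Bool | 0 ∉ sigmaE n (padFalse σ)} = 2 ^ n := by
  have h := card_mul_card_filter_apply_eq (⟨0, hn⟩ : Fin n) false
  rw [Fintype.card_bool, Fintype.card_fin] at h
  convert h using 3
  ext σ
  simp [zero_mem_sigmaE_iff hn, padFalse, hn]

lemma card_filter_notMem_sigmaE {i : ℕ} (hi : i ∈ Ioo 0 n) :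
    4 * #{σ : Fin n → Bool | i ∉ sigmaE n (padFalse σ)} = 2 ^ n := by
  obtain ⟨h0, hin⟩ := mem_Ioo.1 hi
  have h := card_sq_mul_card_filter_apply_eq_and_apply_eq
    (a := (⟨i - 1, by omega⟩ : Fin n)) (b := ⟨i, hin⟩) (by simp; omega) true false
  rw [Fintype.card_bool, Fintype.card_fin, show 2 ^ 2 = 4 from rfl] at h
  convert h using 3
  ext σ
  simp [mem_sigmaE_iff_of_pos h0 hin, padFalse, hin, show i - 1 < n by omega]

theorem four_mul_sum_kappa (hn : 0 < n) :
    4 * ∑ σ : Fin n → Bool, kappa n (padFalse σ) = 2 ^ n * (6 * n + 8) := by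
  have hclosed := Fintype.sum_congr _ (fun _ => 2 * n + 2) fun σ : Fin n → Bool =>
    kappa_add_two_mul_card_notMem n (padFalse σ)
  rw [sum_const, card_univ, Fintype.card_fun, Fintype.card_bool, Fintype.card_fin, smul_eq_mul,
    sum_add_distrib, sum_add_distrib, ← mul_sum, ← card_filter] at hclosed
  have hswap : ∑ σ : Fin n → Bool, #{i ∈ Ioo 0 n | i ∉ sigmaE n (padFalse σ)} =
      ∑ i ∈ Ioo 0 n, #{σ : Fin n → Bool | i ∉ sigmaE n (padFalse σ)} := by
    simp only [card_filter]
    exact sum_comm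
  have hnotMem : 4 * ∑ i ∈ Ioo 0 n, #{σ : Fin n → Bool | i ∉ sigmaE n (padFalse σ)} =
      (n - 1) * 2 ^ n := by
    rw [mul_sum, sum_congr rfl fun i hi => card_filter_notMem_sigmaE hi, sum_const, Nat.card_Ioo,
      Nat.sub_zero, smul_eq_mul]
  have hzero := card_filter_zero_notMem_sigmaE hn
  rw [hswap] at hclosed
  have hpred : (n - 1) * 2 ^ n + 2 ^ n = n * 2 ^ n := by
    rw [← Nat.succ_mul, Nat.succ_eq_add_one, Nat.sub_add_cancel hn]
  linarith

end Average

/-- The average of `κ` over all `σ ∈ {0,1}ⁿ` equals `3n/2 + 2`. -/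
theorem stmt_15 (n : ℕ) (hn : 1 ≤ n) :
    (∑ σ : Fin n → Bool,
        (kappa n (fun i => if h : i < n then σ ⟨i, h⟩ else false) : ℚ)) / 2 ^ n =
      3 * (n : ℚ) / 2 + 2 := by
  change (∑ σ : Fin n → Bool, (kappa n (padFalse σ) : ℚ)) / 2 ^ n = _
  have h : 4 * ∑ σ : Fin n → Bool, (kappa n (padFalse σ) : ℚ) = 2 ^ n * (6 * n + 8) := by
    exact_mod_cast four_mul_sum_kappa hn
  rw [div_eq_iff (by positivity)]
  linear_combination h / 4
end

section
/- With κ(σ) as in the lower-bound theorem, κ : {0,1}ⁿ → {n+2, …, 2n+2} is surjective. -/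
/-!
Write `k = 2n + 2 - s` with `0 ≤ s ≤ n`, and take `σ` alternating on the first `s`
coordinates (ending in `0`) and constantly `1` afterwards. Then `E_σ` contains every index
from `s` on, which forces `m_j ≥ 2(n + 1 - j)` for `j ≥ s`, while below `s` the strict
decrease alone gives `m_0 ≥ m_s + s ≥ 2n + 2 - s`. Conversely `E_σ` meets `{0, …, s-1}`
only in indices of the parity of `s`, so the sequence decreasing by `1` down to index `s`
and by `2` afterwards attains this bound.
-/

def altThenOnes (s : ℕ) : ℕ → Bool := fun j => decide ((j + s) % 2 = 0 ∨ s ≤ j)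

lemma sigmaE_altThenOnes {n s : ℕ} (hs : s ≤ n) :
    sigmaE n (altThenOnes s) = {j | j ≤ n ∧ ((j + s) % 2 = 0 ∨ s ≤ j)} := by
  ext j
  simp only [sigmaE, altThenOnes, Set.mem_ofPred_eq, decide_eq_true_eq, decide_eq_false_iff_not]
  omega

lemma add_sub_le_of_forall_succ_lt {m : ℕ → ℕ} {n : ℕ} (hdec : ∀ j < n, m (j + 1) < m j)
    {i j : ℕ} (hij : i ≤ j) (hjn : j ≤ n) : m j + (j - i) ≤ m i := by
  induction j, hij using Nat.le_induction with
  | base => simp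
  | succ j hij ih =>
    have := hdec j (by omega)
    have := ih (by omega)
    omega

lemma two_mul_le_of_even {m : ℕ → ℕ} {n s : ℕ} (hmn : 2 ≤ m n)
    (hdec : ∀ j < n, m (j + 1) < m j) (hev : ∀ j, s ≤ j → j ≤ n → Even (m j))
    {j : ℕ} (hsj : s ≤ j) (hjn : j ≤ n) : 2 * (n + 1 - j) ≤ m j := by
  induction hjn using Nat.decreasingInduction with
  | self => omega
  | of_succ j hj ih =>
    obtain ⟨r, hr⟩ := hev j hsj hj.le
    have := hdec j hj
    have := ih (by omega)
    omega

lemma kappa_altThenOnes {n s : ℕ} (hs : s ≤ n) :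
    kappa n (altThenOnes s) = 2 * n + 2 - s := by
  unfold kappa
  rw [sigmaE_altThenOnes hs]
  refine IsLeast.csInf_eq ⟨⟨fun j => 2 * n + 2 - j - max j s, ?_, ?_, ?_, ?_⟩, ?_⟩
  · simp
  · dsimp only
    omega
  · intro j hj
    dsimp only
    omega
  · rintro j ⟨hjn, hj⟩
    rw [Nat.even_iff]
    dsimp only
    omega
  · rintro _ ⟨m, rfl, hmn, hdec, hev⟩
    have hs_le := two_mul_le_of_even hmn hdec (fun j hsj hjn => hev j ⟨hjn, .inr hsj⟩) le_rfl hs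
    have h0_le := add_sub_le_of_forall_succ_lt hdec (Nat.zero_le s) hs
    omega

theorem stmt_16_general (n : ℕ) :
    ∀ k : ℕ, n + 2 ≤ k → k ≤ 2 * n + 2 → ∃ σ : ℕ → Bool, kappa n σ = k := by
  intro k hk₁ hk₂
  refine ⟨altThenOnes (2 * n + 2 - k), ?_⟩
  rw [kappa_altThenOnes (by omega)]
  omega

/-- `κ : {0,1}ⁿ → {n+2,…,2n+2}` is surjective. -/
theorem stmt_16 (n : ℕ) (hn : 1 ≤ n) :
    ∀ k : ℕ, n + 2 ≤ k → k ≤ 2 * n + 2 → ∃ σ : ℕ → Bool, kappa n σ = k :=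
  stmt_16_general n
end
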